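/- arXiv:2507.21445 — 3 statements merged into one kernel-verified Lean document; each statement's English description precedes it below -/
import Mathlib

section
/- Let G = (V, E, A) be a mixed acyclic graph and let C ⊆ V be a clique of the underlying graph of G. Then no vertex of C is incident to two or more edges of E having both endpoints in C; equivalently, the set of edges of E with both endpoints in C forms a matching. -/
/-- A mixed graph `G = (V, E, A)`: a simple graph `E` of undirected edges together
with a set `A` of arcs (ordered pairs of distinct vertices). -/
structure MixedGraph (V : Type*) where
  E : SimpleGraph V
  A : V → V → Prop
  A_irrefl : ∀ v : V, ¬ A v v

namespace MixedGraph

variable {V : Type*}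

/-- The underlying simple graph of a mixed graph. -/
def underlying (G : MixedGraph V) : SimpleGraph V where
  Adj u v := G.E.Adj u v ∨ G.A u v ∨ G.A v u
  symm := by
    constructor
    intro u v h
    rcases h with h | h | h
    · exact Or.inl h.symm
    · exact Or.inr (Or.inr h)
    · exact Or.inr (Or.inl h)
  loopless := by
    constructor
    intro v h
    rcases h with h | h | h
    · exact G.E.loopless.irrefl v h
    · exact G.A_irrefl v h
    · exact G.A_irrefl v h

/-- `G` contains a mixed cycle: a cyclic sequence of `p ≥ 2` pairwise distinct
vertices in which each consecutive pair (cyclically) is an undirected edge of `E`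
or an arc of `A`, and no edge of `E` is used by two different consecutive pairs.
(`useE i = true` means the `i`-th consecutive pair uses an edge of `E`.) -/
def HasMixedCycle (G : MixedGraph V) : Prop :=
  ∃ (p : ℕ) (c : Fin (p + 2) → V) (useE : Fin (p + 2) → Bool),
    Function.Injective c ∧
    (∀ i : Fin (p + 2),
      (useE i = true → G.E.Adj (c i) (c (i + 1))) ∧
      (useE i = false → G.A (c i) (c (i + 1)))) ∧
    (∀ i j : Fin (p + 2), i ≠ j → useE i = true → useE j = true →
      s(c i, c (i + 1)) ≠ s(c j, c (j + 1)))

/-- A mixed graph is mixed acyclic if it has no mixed cycle. -/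
def MixedAcyclic (G : MixedGraph V) : Prop := ¬ G.HasMixedCycle

/-- An orientation of the undirected edges of a mixed graph: each edge
`{u,v} ∈ E` is assigned exactly one of the two directions `(u,v)`, `(v,u)`. -/
structure Orientation (G : MixedGraph V) where
  dir : V → V → Prop
  dir_adj : ∀ u v : V, dir u v → G.E.Adj u v
  total : ∀ u v : V, G.E.Adj u v → dir u v ∨ dir v u
  antisymm : ∀ u v : V, dir u v → ¬ dir v u

/-- The arc relation of the digraph `G_λ`: the original arcs together with the
chosen orientations of the undirected edges. -/
def Orientation.arc {G : MixedGraph V} (lam : Orientation G) (u v : V) : Prop :=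
  G.A u v ∨ lam.dir u v

/-- The orientation `lam` satisfies the set `T` of terminal pairs if `G_λ`
contains a directed path from `s` to `t` for every `(s, t) ∈ T`. -/
def Orientation.Satisfies {G : MixedGraph V} (lam : Orientation G)
    (T : Set (V × V)) : Prop :=
  ∀ p ∈ T, Relation.ReflTransGen lam.arc p.1 p.2

/-- `(G, T)` is a yes-instance of Steiner Orientation: some orientation of the
undirected edges satisfies all terminal pairs. -/
def YesInstance (G : MixedGraph V) (T : Set (V × V)) : Prop :=
  ∃ lam : Orientation G, lam.Satisfies T

/-- The number of arcs of `G` having `v` as head or as tail. -/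
noncomputable def degA (G : MixedGraph V) (v : V) : ℕ :=
  {p : V × V | G.A p.1 p.2 ∧ (p.1 = v ∨ p.2 = v)}.ncard

end MixedGraph

namespace MixedGraph

variable {V : Type*} (G : MixedGraph V)

/-- The mixed cycle is `u, w₁, w₂`; its undirected edges are distinct because its vertices are. -/
lemma hasMixedCycle_of_triangle {u w₁ w₂ : V} (h₁ : G.E.Adj u w₁) (h₂ : G.E.Adj u w₂)
    (hne : w₁ ≠ w₂) (h : G.E.Adj w₁ w₂ ∨ G.A w₁ w₂) : G.HasMixedCycle := by
  have hu₁ : u ≠ w₁ := h₁.ne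
  have hu₂ : u ≠ w₂ := h₂.ne
  have key : ∀ b : Bool, (b = true → G.E.Adj w₁ w₂) → (b = false → G.A w₁ w₂) →
      G.HasMixedCycle := by
    intro b hbt hbf
    refine ⟨1, ![u, w₁, w₂], ![true, b, true], ?_, ?_, ?_⟩
    · intro i j hij
      fin_cases i <;> fin_cases j <;> simp_all [eq_comm]
    · intro i
      fin_cases i <;> refine ⟨fun hb => ?_, fun hb => ?_⟩ <;> simp_all [h₂.symm]
    · intro i j hij hi hj
      fin_cases i <;> fin_cases j <;> simp_all [eq_comm]
  rcases h with hE | hA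
  · exact key true (fun _ => hE) (by simp)
  · exact key false (by simp) (fun _ => hA)

lemma hasMixedCycle_of_underlying_adj {u w₁ w₂ : V} (h₁ : G.E.Adj u w₁) (h₂ : G.E.Adj u w₂)
    (h : G.underlying.Adj w₁ w₂) : G.HasMixedCycle := by
  have hne : w₁ ≠ w₂ := h.ne
  rcases h with hE | hA | hA
  · exact G.hasMixedCycle_of_triangle h₁ h₂ hne (Or.inl hE)
  · exact G.hasMixedCycle_of_triangle h₁ h₂ hne (Or.inr hA)
  · exact G.hasMixedCycle_of_triangle h₂ h₁ hne.symm (Or.inr hA)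

end MixedGraph

theorem steinerOrientation_stmt5_general {V : Type*} (G : MixedGraph V)
    (hG : G.MixedAcyclic) (C : Set V) (hC : G.underlying.IsClique C) :
    ∀ u ∈ C, ∀ w₁ ∈ C, ∀ w₂ ∈ C,
      G.E.Adj u w₁ → G.E.Adj u w₂ → w₁ = w₂ := by
  intro u _ w₁ hw₁ w₂ hw₂ h₁ h₂
  by_contra hne
  exact hG (G.hasMixedCycle_of_underlying_adj h₁ h₂ (hC hw₁ hw₂ hne))

/-- If `G` is mixed acyclic and `C` is a clique of the underlying
graph, then no vertex of `C` is incident to two or more edges of `E` with both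
endpoints in `C`; i.e. the edges of `E` inside `C` form a matching. -/
theorem steinerOrientation_stmt5 {V : Type*} [Fintype V] (G : MixedGraph V)
    (hG : G.MixedAcyclic) (C : Set V) (hC : G.underlying.IsClique C) :
    ∀ u ∈ C, ∀ w₁ ∈ C, ∀ w₂ ∈ C,
      G.E.Adj u w₁ → G.E.Adj u w₂ → w₁ = w₂ :=
  steinerOrientation_stmt5_general G hG C hC
end

section
/- Let G = (V, E, A) be a mixed acyclic graph, let S ⊆ V be such that the underlying graph of the induced mixed subgraph on V ∖ S is a complete graph, and assume every edge of E has both endpoints in V ∖ S. Let D be the digraph on V whose arcs are A together with both orientations (u,v) and (v,u) of every edge {u,v} ∈ E. Let s, t ∈ V be such that D contains a directed path from s to t but the digraph (V, A) contains no directed path from s to t. Then there exists a single edge e ∈ E such that every directed path from s to t in D traverses exactly one edge of E (in one of its two orientations), and that edge is e. -/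
/-!
The vertices incident to edges of `E` are pairwise adjacent in the underlying graph. If a simple
`s`–`t` path in `D` used two edges of `E`, the first `{x, y}` and the last `{u, v}`, then `x` and
`v` would be adjacent: an edge or an arc `v → x` closes the segment of the path from `x` to `v` into
a mixed cycle, and an arc `x → v` yields an `A`-path from `s` to `t`. Hence every such path uses
exactly one edge `{x, y}`, with `x` reachable from `s` and `t` reachable from `y` along arcs.
Two different edges with this property close a mixed cycle on three or four of their endpoints,
so all paths use the same edge.
-/

open Relation

namespace List

variable {α : Type*}

theorem mem_zip_tail_iff {l : List α} {a b : α} :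
    (a, b) ∈ l.zip l.tail ↔ ∃ l₁ l₂, l = l₁ ++ a :: b :: l₂ := by
  induction l with
  | nil => simp
  | cons c l ih =>
    cases l with
    | nil =>
      simp only [tail_cons, zip_nil_right, not_mem_nil, false_iff, not_exists]
      intro l₁ l₂ h
      have := congrArg length h
      simp at this
      omega
    | cons d l =>
      simp only [tail_cons] at ih
      simp only [tail_cons, zip_cons_cons, mem_cons, Prod.mk.injEq, ih]
      constructor
      · rintro (⟨rfl, rfl⟩ | ⟨l₁, l₂, h⟩)
        · exact ⟨[], l, rfl⟩
        · exact ⟨c :: l₁, l₂, by rw [h]; rfl⟩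
      · rintro ⟨l₁, l₂, h⟩
        rcases cons_eq_append_iff.1 h with ⟨-, h'⟩ | ⟨l₁', -, h'⟩
        · simp only [cons.injEq] at h'
          exact Or.inl ⟨h'.1, h'.2.1⟩
        · exact Or.inr ⟨l₁', l₂, h'⟩

theorem IsChain.reflTransGen {r : α → α → Prop} {l : List α} {a b : α} (hl : l.IsChain r)
    (ha : l.head? = some a) (hb : l.getLast? = some b) : ReflTransGen r a b := by
  obtain ⟨l, rfl⟩ := head?_eq_some_iff.1 ha
  refine relationReflTransGen_of_exists_isChain_cons l hl (Option.some_injective _ ?_)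
  rw [← hb, getLast?_eq_some_getLast]

theorem exists_isChain_nodup_of_reflTransGen {r : α → α → Prop} {a b : α}
    (h : ReflTransGen r a b) :
    ∃ l, (a :: l).IsChain r ∧ (a :: l).Nodup ∧ (a :: l).getLast? = some b := by
  induction h using ReflTransGen.head_induction_on with
  | refl => exact ⟨[], .singleton _, nodup_singleton _, rfl⟩
  | @head a c hac _ ih =>
    obtain ⟨l, hch, hnd, hlast⟩ := ih
    by_cases ha : a ∈ c :: l
    · obtain ⟨l₁, l₂, hl⟩ := append_of_mem ha
      rw [hl] at hch hnd hlast
      refine ⟨l₂, hch.right_of_append, hnd.of_append_right, ?_⟩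
      rwa [getLast?_append_of_ne_nil _ (cons_ne_nil _ _)] at hlast
    · exact ⟨c :: l, hch.cons_cons hac, nodup_cons.2 ⟨ha, hnd⟩, by simpa using hlast⟩

theorem exists_first_rel_of_isChain_or {q r : α → α → Prop} {l : List α} {a : α}
    (hl : l.IsChain (fun x y => q x y ∨ r x y)) (ha : l.head? = some a)
    (hr : ¬ l.IsChain (fun x y => ¬ r x y)) :
    ∃ l₁ x y l₂, l = l₁ ++ x :: y :: l₂ ∧ r x y ∧ (l₁ ++ [x]).IsChain (fun x y => ¬ r x y) ∧
      ReflTransGen q a x := by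
  induction l generalizing a with
  | nil => simp at ha
  | cons c l ih =>
    obtain rfl : c = a := by simpa using ha
    cases l with
    | nil => exact absurd (.singleton c) hr
    | cons d l =>
      rw [isChain_cons_cons] at hl hr
      by_cases hcd : r c d
      · exact ⟨[], c, d, l, rfl, hcd, .singleton c, .refl⟩
      obtain ⟨l₁, x, y, l₂, hl', hxy, hch, hdx⟩ :=
        ih hl.2 rfl (fun h => hr ⟨hcd, h⟩)
      refine ⟨c :: l₁, x, y, l₂, by rw [hl']; rfl, hxy, ?_, .head (hl.1.resolve_right hcd) hdx⟩
      have hd : (l₁ ++ [x]).head? = some d := by cases l₁ <;> simp_all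
      exact isChain_cons.2 ⟨by simpa [hd] using hcd, hch⟩

theorem exists_last_rel_of_isChain_or {q r : α → α → Prop} {l : List α} {b : α}
    (hl : l.IsChain (fun x y => q x y ∨ r x y)) (hb : l.getLast? = some b)
    (hr : ¬ l.IsChain (fun x y => ¬ r x y)) :
    ∃ l₁ x y l₂, l = l₁ ++ x :: y :: l₂ ∧ r x y ∧ ReflTransGen q y b := by
  obtain ⟨l₁, y, x, l₂, hl', hxy, -, hby⟩ := exists_first_rel_of_isChain_or (q := flip q)
    (r := flip r) (isChain_reverse.2 hl) (by rwa [head?_reverse]) (by rwa [isChain_reverse])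
  refine ⟨l₂.reverse, x, y, l₁.reverse, ?_, hxy, hby.swap⟩
  rw [← reverse_reverse l, hl']
  simp

end List

namespace MixedGraph

variable {V : Type*} {G : MixedGraph V}

variable (G) in
def Step (a b : V) : Prop := G.A a b ∨ G.E.Adj a b

theorem step_or_step_of_underlying_adj {a b : V} (h : G.underlying.Adj a b) :
    G.Step a b ∨ G.Step b a := by
  rcases h with h | h | h
  exacts [Or.inl (Or.inr h), Or.inl (Or.inl h), Or.inr (Or.inl h)]

variable (G) in
theorem hasMixedCycle_of_injective {p : ℕ} (c : Fin (p + 3) → V) (hc : Function.Injective c)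
    (hstep : ∀ i, G.Step (c i) (c (i + 1))) : G.HasMixedCycle := by
  classical
  refine ⟨p + 1, c, fun i => decide (G.E.Adj (c i) (c (i + 1))), hc,
    fun i => ⟨of_decide_eq_true, fun h => (hstep i).resolve_right (of_decide_eq_false h)⟩, ?_⟩
  intro i j hij _ _ heq
  rcases Sym2.eq_iff.1 heq with ⟨h, -⟩ | ⟨h₁, h₂⟩
  · exact hij (hc h)
  · -- `i = j + 1` and `j = i + 1`, impossible in `Fin n` for `n ≥ 3`
    obtain rfl := hc h₁
    replace h₂ := hc h₂
    rw [add_assoc, add_eq_left, Fin.ext_iff] at h₂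
    simp [Fin.val_add, Nat.mod_eq_of_lt (show 2 < p + 3 by omega)] at h₂

theorem MixedAcyclic.not_isChain_cycle (hG : G.MixedAcyclic) {x : V} {l : List V}
    (hnd : (x :: l).Nodup) (hlen : 2 ≤ l.length) : ¬ (x :: l ++ [x]).IsChain G.Step := by
  intro hch
  obtain ⟨p, hp⟩ : ∃ p, l.length = p + 2 := ⟨l.length - 2, by omega⟩
  refine hG (G.hasMixedCycle_of_injective (p := p) (fun i => (x :: l)[(i : ℕ)]'(by simp; omega))
    (fun i j h => by simpa [Fin.ext_iff] using hnd.getElem_inj_iff.1 h) fun i => ?_)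
  have hstep := List.isChain_iff_getElem.1 hch i (by simp; omega)
  by_cases hlast : (i : ℕ) + 1 < p + 3
  · have hv : ((i + 1 : Fin (p + 3)) : ℕ) = i + 1 := by
      simp [Fin.val_add, Nat.mod_eq_of_lt hlast]
    simp only [hv]
    rwa [List.getElem_append_left, List.getElem_append_left] at hstep
  · have hv : ((i + 1 : Fin (p + 3)) : ℕ) = 0 := by
      rw [Fin.val_add, Fin.val_one', Nat.add_mod_mod, show (i : ℕ) + 1 = p + 3 by omega,
        Nat.mod_self]
    simp only [hv]
    rw [List.getElem_append_left, List.getElem_append_right] at hstep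
    · simpa using hstep
    all_goals simp; omega

theorem MixedAcyclic.arc_of_isChain (hG : G.MixedAcyclic)
    (hK : G.E.support.Pairwise G.underlying.Adj) {x v : V} {m : List V} (hm : m ≠ [])
    (hnd : (x :: (m ++ [v])).Nodup) (hch : (x :: (m ++ [v])).IsChain G.Step)
    (hx : x ∈ G.E.support) (hv : v ∈ G.E.support) : G.A x v := by
  have hxv : x ≠ v := by rintro rfl; simp at hnd
  suffices ¬ G.Step v x by
    rcases hK hx hv hxv with h | h | h
    exacts [absurd (Or.inr h.symm) this, h, absurd (Or.inl h) this]
  intro hvx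
  refine hG.not_isChain_cycle hnd ?_ (hch.append (.singleton x) ?_)
  · have := List.length_pos_iff.2 hm
    simp; omega
  · rw [← List.cons_append, List.getLast?_concat]
    simpa using hvx

variable (G) in
def IsCrossing (s t x y : V) : Prop :=
  G.E.Adj x y ∧ ReflTransGen G.A s x ∧ ReflTransGen G.A y t

variable {s t x₁ y₁ x₂ y₂ : V}

theorem IsCrossing.ne (hst : ¬ ReflTransGen G.A s t) (h₁ : G.IsCrossing s t x₁ y₁)
    (h₂ : G.IsCrossing s t x₂ y₂) : x₁ ≠ y₂ := by
  rintro rfl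
  exact hst (h₁.2.1.trans h₂.2.2)

theorem IsCrossing.step (hK : G.E.support.Pairwise G.underlying.Adj)
    (hst : ¬ ReflTransGen G.A s t) (h₁ : G.IsCrossing s t x₁ y₁)
    (h₂ : G.IsCrossing s t x₂ y₂) : G.Step y₂ x₁ := by
  rcases hK ⟨y₁, h₁.1⟩ ⟨x₂, h₂.1.symm⟩ (h₁.ne hst h₂) with h | h | h
  · exact Or.inr h.symm
  · exact absurd (h₁.2.1.tail h |>.trans h₂.2.2) hst
  · exact Or.inl h

theorem IsCrossing.sym2_eq (hG : G.MixedAcyclic) (hK : G.E.support.Pairwise G.underlying.Adj)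
    (hst : ¬ ReflTransGen G.A s t) (h₁ : G.IsCrossing s t x₁ y₁)
    (h₂ : G.IsCrossing s t x₂ y₂) : s(x₁, y₁) = s(x₂, y₂) := by
  by_contra hne
  have e₁ : G.Step x₁ y₁ := Or.inr h₁.1
  have e₁' : G.Step y₁ x₁ := Or.inr h₁.1.symm
  have e₂ : G.Step x₂ y₂ := Or.inr h₂.1
  have e₂' : G.Step y₂ x₂ := Or.inr h₂.1.symm
  have n₁ := h₁.1.ne
  have n₂ := h₂.1.ne
  have n₁₂ := h₁.ne hst h₂
  have n₂₁ := h₂.ne hst h₁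
  by_cases hx : x₁ = x₂
  · subst hx
    have hy : y₁ ≠ y₂ := by rintro rfl; exact hne rfl
    rcases step_or_step_of_underlying_adj (hK ⟨x₁, h₁.1.symm⟩ ⟨x₁, h₂.1.symm⟩ hy) with h | h
    · exact hG.not_isChain_cycle (x := x₁) (l := [y₁, y₂]) (by simp [*]) le_rfl (by simp [*])
    · exact hG.not_isChain_cycle (x := x₁) (l := [y₂, y₁]) (by simp [*, hy.symm]) le_rfl
        (by simp [*])
  by_cases hy : y₁ = y₂
  · subst hy
    rcases step_or_step_of_underlying_adj (hK ⟨y₁, h₁.1⟩ ⟨y₁, h₂.1⟩ hx) with h | h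
    · exact hG.not_isChain_cycle (x := x₁) (l := [x₂, y₁]) (by simp [*]) le_rfl (by simp [*])
    · exact hG.not_isChain_cycle (x := x₂) (l := [x₁, y₁]) (by simp [*, Ne.symm hx]) le_rfl
        (by simp [*])
  · exact hG.not_isChain_cycle (x := x₁) (l := [y₁, x₂, y₂]) (by simp [*, n₂₁.symm]) (by simp)
      (by simp [*, h₂.step hK hst h₁, h₁.step hK hst h₂])

theorem MixedAcyclic.exists_isCrossing (hG : G.MixedAcyclic)
    (hK : G.E.support.Pairwise G.underlying.Adj) (hst : ¬ ReflTransGen G.A s t) {l : List V}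
    (hch : l.IsChain G.Step) (hnd : l.Nodup) (hs : l.head? = some s) (ht : l.getLast? = some t) :
    ∃ x y, G.IsCrossing s t x y ∧ (x, y) ∈ l.zip l.tail ∧
      ∀ p ∈ l.zip l.tail, G.E.Adj p.1 p.2 → p = (x, y) := by
  have hA {l : List V} (h : l.IsChain G.Step) (h' : l.IsChain fun u v => ¬ G.E.Adj u v) :
      l.IsChain G.A :=
    List.isChain_iff_forall_rel_of_append_cons_cons.2 fun _ _ _ _ e =>
      (List.isChain_iff_forall_rel_of_append_cons_cons.1 h e).resolve_right
        (List.isChain_iff_forall_rel_of_append_cons_cons.1 h' e)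
  have hE : ¬ l.IsChain fun u v => ¬ G.E.Adj u v := fun h => hst ((hA hch h).reflTransGen hs ht)
  obtain ⟨l₁, x, y, l₂, rfl, hxy, hpre, hsx⟩ := List.exists_first_rel_of_isChain_or hch hs hE
  have hsuf : (y :: l₂).IsChain fun u v => ¬ G.E.Adj u v := by
    by_contra hsuf
    obtain ⟨m₁, u, v, m₂, hm, huv, hvt⟩ := List.exists_last_rel_of_isChain_or
      (hch.infix ⟨l₁ ++ [x], [], by simp⟩) (by simpa using ht) hsuf
    have hseg : x :: (m₁ ++ [u] ++ [v]) <:+: l₁ ++ x :: y :: l₂ := ⟨l₁, m₂, by rw [hm]; simp⟩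
    have hxv := hG.arc_of_isChain hK (by simp) (hnd.sublist hseg.sublist) (hch.infix hseg)
      ⟨y, hxy⟩ ⟨u, huv.symm⟩
    exact hst (hsx.tail hxv |>.trans hvt)
  refine ⟨x, y, ⟨hxy, hsx, ?_⟩, List.mem_zip_tail_iff.2 ⟨l₁, l₂, rfl⟩, ?_⟩
  · exact (hA (hch.infix ⟨l₁ ++ [x], [], by simp⟩) hsuf).reflTransGen rfl (by simpa using ht)
  · rintro ⟨u, v⟩ huv he
    obtain ⟨m₁, m₂, hm⟩ := List.mem_zip_tail_iff.1 huv
    have honly : (l₁ ++ x :: y :: l₂).IsChain fun a b => G.E.Adj a b → a = x ∧ b = y :=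
      List.isChain_append_cons_cons.2 ⟨hpre.imp fun _ _ h h' => absurd h' h,
        fun _ => ⟨rfl, rfl⟩, hsuf.imp fun _ _ h h' => absurd h' h⟩
    obtain ⟨rfl, rfl⟩ := List.isChain_iff_forall_rel_of_append_cons_cons.1 honly hm he
    rfl

end MixedGraph

theorem steinerOrientation_stmt6_general {V : Type*} (G : MixedGraph V)
    (hG : G.MixedAcyclic) (S : Set V)
    (hcomp : ∀ a b : V, a ∉ S → b ∉ S → a ≠ b → G.underlying.Adj a b)
    (hE : ∀ a b : V, G.E.Adj a b → a ∉ S ∧ b ∉ S)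
    (s t : V)
    (hst : Relation.ReflTransGen (fun a b => G.A a b ∨ G.E.Adj a b) s t)
    (hnA : ¬ Relation.ReflTransGen (fun a b => G.A a b) s t) :
    ∃ e ∈ G.E.edgeSet,
      ∀ l : List V, l.Chain' (fun a b => G.A a b ∨ G.E.Adj a b) → l.Nodup →
        l.head? = some s → l.getLast? = some t →
        (∃! p : V × V, p ∈ l.zip l.tail ∧ s(p.1, p.2) ∈ G.E.edgeSet) ∧
        (∀ p ∈ l.zip l.tail, s(p.1, p.2) ∈ G.E.edgeSet → s(p.1, p.2) = e) := by
  have hK : G.E.support.Pairwise G.underlying.Adj := fun a ⟨b, hab⟩ c ⟨d, hcd⟩ hac =>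
    hcomp a c (hE a b hab).1 (hE c d hcd).1 hac
  obtain ⟨l₀, hch₀, hnd₀, ht₀⟩ := List.exists_isChain_nodup_of_reflTransGen hst
  obtain ⟨x₀, y₀, hc₀, -⟩ := hG.exists_isCrossing hK hnA hch₀ hnd₀ rfl ht₀
  refine ⟨s(x₀, y₀), hc₀.1, fun l hch hnd hs ht => ?_⟩
  obtain ⟨x, y, hc, hxy, honly⟩ := hG.exists_isCrossing hK hnA hch hnd hs ht
  refine ⟨⟨(x, y), ⟨hxy, hc.1⟩, fun p hp => honly p hp.1 hp.2⟩, fun p hp he => ?_⟩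
  rw [honly p hp he]
  exact hc.sym2_eq hG hK hnA hc₀

/-- Let `G` be mixed acyclic, `S ⊆ V` with the underlying graph on
`V ∖ S` complete, and assume every edge of `E` has both endpoints in `V ∖ S`.
Let `D` be the digraph whose arcs are `A` plus both orientations of every edge
of `E`. If `D` contains a directed path from `s` to `t` but `(V, A)` does not,
then there is a single edge `e ∈ E` such that every directed path from `s` to
`t` in `D` traverses exactly one edge of `E` (in one of its two orientations),
and that edge is `e`. -/
theorem steinerOrientation_stmt6 {V : Type*} [Fintype V] (G : MixedGraph V)
    (hG : G.MixedAcyclic) (S : Set V)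
    (hcomp : ∀ a b : V, a ∉ S → b ∉ S → a ≠ b → G.underlying.Adj a b)
    (hE : ∀ a b : V, G.E.Adj a b → a ∉ S ∧ b ∉ S)
    (s t : V)
    (hst : Relation.ReflTransGen (fun a b => G.A a b ∨ G.E.Adj a b) s t)
    (hnA : ¬ Relation.ReflTransGen (fun a b => G.A a b) s t) :
    ∃ e ∈ G.E.edgeSet,
      ∀ l : List V, l.Chain' (fun a b => G.A a b ∨ G.E.Adj a b) → l.Nodup →
        l.head? = some s → l.getLast? = some t →
        (∃! p : V × V, p ∈ l.zip l.tail ∧ s(p.1, p.2) ∈ G.E.edgeSet) ∧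
        (∀ p ∈ l.zip l.tail, s(p.1, p.2) ∈ G.E.edgeSet → s(p.1, p.2) = e) :=
  steinerOrientation_stmt6_general G hG S hcomp hE s t hst hnA
end

section
/- Let φ be a monotone 3-CNF formula over variables x_1, …, x_n. Then φ is satisfiable if and only if (G(φ), T(φ)) is a yes-instance of Steiner Orientation. -/
/-- Vertices of the graph `G(φ)` built from a monotone 3-CNF formula `φ` with
`n` variables and `m` clauses: the hubs `ℓ`, `r`, the variable vertices
`ℓ_i`, `r_i`, and per-clause vertices `t_j` and `v^j_i`. -/
inductive SOVtx (n m : ℕ) where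
  | l : SOVtx n m
  | r : SOVtx n m
  | li (i : Fin n) : SOVtx n m
  | ri (i : Fin n) : SOVtx n m
  | t (j : Fin m) : SOVtx n m
  | v (j : Fin m) (i : Fin n) : SOVtx n m
  deriving DecidableEq

/-- The undirected edges of `G(φ)`: `{ℓ_i, r_i}` for each variable `x_i`, and
`{v^j_i, t_j}` for each clause `c_j` and each variable `x_i` of `c_j`. -/
def phiE (n m : ℕ) (vars : Fin m → Finset (Fin n)) : SimpleGraph (SOVtx n m) :=
  SimpleGraph.fromRel (fun a b =>
    (∃ i : Fin n, a = SOVtx.li i ∧ b = SOVtx.ri i) ∨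
    (∃ (j : Fin m) (i : Fin n), i ∈ vars j ∧ a = SOVtx.v j i ∧ b = SOVtx.t j))

/-- The arcs of `G(φ)`: `(ℓ_i, ℓ)` and `(r_i, r)` for each variable; for each
positive clause `c_j` (`sign j = true`) the arcs `(ℓ, v^j_i)` and `(r, t_j)`;
for each negative clause `c_j` (`sign j = false`) the arcs `(r, v^j_i)` and
`(ℓ, t_j)`. -/
def phiA (n m : ℕ) (sign : Fin m → Bool) (vars : Fin m → Finset (Fin n)) :
    SOVtx n m → SOVtx n m → Prop := fun a b =>
  (∃ i : Fin n, a = SOVtx.li i ∧ b = SOVtx.l) ∨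
  (∃ i : Fin n, a = SOVtx.ri i ∧ b = SOVtx.r) ∨
  (∃ (j : Fin m) (i : Fin n),
      sign j = true ∧ i ∈ vars j ∧ a = SOVtx.l ∧ b = SOVtx.v j i) ∨
  (∃ j : Fin m, sign j = true ∧ a = SOVtx.r ∧ b = SOVtx.t j) ∨
  (∃ (j : Fin m) (i : Fin n),
      sign j = false ∧ i ∈ vars j ∧ a = SOVtx.r ∧ b = SOVtx.v j i) ∨
  (∃ j : Fin m, sign j = false ∧ a = SOVtx.l ∧ b = SOVtx.t j)

/-- The mixed graph `G(φ)`. -/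
def phiG (n m : ℕ) (sign : Fin m → Bool) (vars : Fin m → Finset (Fin n)) :
    MixedGraph (SOVtx n m) where
  E := phiE n m vars
  A := phiA n m sign vars
  A_irrefl := by
    rintro x (⟨i, rfl, h⟩ | ⟨i, rfl, h⟩ | ⟨j, i, _, _, rfl, h⟩ |
      ⟨j, _, rfl, h⟩ | ⟨j, i, _, _, rfl, h⟩ | ⟨j, _, rfl, h⟩) <;>
      cases h

/-- The terminal pairs `T(φ)`: for each positive clause `c_j` the pairs
`(ℓ, t_j)` and `(r_i, v^j_i)` for the variables `x_i` of `c_j`; for each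
negative clause `c_j` the pairs `(r, t_j)` and `(ℓ_i, v^j_i)`. -/
def phiT (n m : ℕ) (sign : Fin m → Bool) (vars : Fin m → Finset (Fin n)) :
    Set (SOVtx n m × SOVtx n m) :=
  {p | (∃ j : Fin m, sign j = true ∧ p = (SOVtx.l, SOVtx.t j)) ∨
       (∃ (j : Fin m) (i : Fin n),
          sign j = true ∧ i ∈ vars j ∧ p = (SOVtx.ri i, SOVtx.v j i)) ∨
       (∃ j : Fin m, sign j = false ∧ p = (SOVtx.r, SOVtx.t j)) ∨
       (∃ (j : Fin m) (i : Fin n),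
          sign j = false ∧ i ∈ vars j ∧ p = (SOVtx.li i, SOVtx.v j i))}

/-! Write `hub true, side true i = ℓ, ℓ_i` and `hub false, side false i = r, r_i`. A clause of
sign `s` then has the arcs `hub s → v^j_i`, `hub !s → t_j` and the terminal pairs `(hub s, t_j)`,
`(side !s i, v^j_i)`, so positive and negative clauses are handled at once.

An assignment `α` orients `side !(α i) i → side (α i) i`, and `v^j_i → t_j` exactly when `x_i`
satisfies `c_j`. A satisfied literal gives the path `hub s → v^j_i → t_j`, and `side !s i`
reaches `v^j_i` through `side s i → hub s` or through `hub !s → t_j → v^j_i`.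

Conversely, the only vertices reaching `hub b` are `hub b`, the `side b i`, and those
`side !b i` oriented towards `side b i`, so `hub s` does not reach `hub !s`. Hence the path
from `hub s` to `t_j` ends with an edge `v^j_i → t_j`; then the path from `side !s i` to
`v^j_i` enters through `hub s`, which forces `side !s i → side s i`, i.e. `x_i` satisfies
`c_j`. -/

namespace MixedGraph.Orientation

variable {V β : Type*} [LinearOrder β]

def ofRank (G : MixedGraph V) (f : V → β) (hf : ∀ u v, G.E.Adj u v → f u ≠ f v) :
    G.Orientation where
  dir u v := G.E.Adj u v ∧ f v < f u
  dir_adj _ _ h := h.1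
  total u v h :=
    (lt_or_gt_of_ne (hf u v h)).symm.imp (fun hlt => ⟨h, hlt⟩) fun hlt => ⟨h.symm, hlt⟩
  antisymm _ _ h h' := lt_asymm h.2 h'.2

end MixedGraph.Orientation

namespace SOVtx

variable {n m : ℕ}

def hub : Bool → SOVtx n m
  | true => l
  | false => r

def side : Bool → Fin n → SOVtx n m
  | true, i => li i
  | false, i => ri i

@[simp] lemma side_inj {b b' : Bool} {i i' : Fin n} :
    (side b i : SOVtx n m) = side b' i' ↔ b = b' ∧ i = i' := by
  cases b <;> cases b' <;> simp [side]

@[simp] lemma hub_inj {b b' : Bool} : (hub b : SOVtx n m) = hub b' ↔ b = b' := by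
  cases b <;> cases b' <;> simp [hub]

@[simp] lemma hub_ne_side (b b' : Bool) (i : Fin n) : (hub b : SOVtx n m) ≠ side b' i := by
  cases b <;> cases b' <;> simp [side, hub]

@[simp] lemma side_ne_hub (b b' : Bool) (i : Fin n) : (side b i : SOVtx n m) ≠ hub b' :=
  (hub_ne_side b' b i).symm

@[simp] lemma v_ne_side (j : Fin m) (i i' : Fin n) (b : Bool) : v j i ≠ side b i' := by
  cases b <;> simp [side]

@[simp] lemma t_ne_hub (j : Fin m) (b : Bool) : (t j : SOVtx n m) ≠ hub b := by
  cases b <;> simp [hub]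

end SOVtx

open SOVtx Relation

variable {n m : ℕ} {sign : Fin m → Bool} {vars : Fin m → Finset (Fin n)}

lemma mem_phiT_iff {p : SOVtx n m × SOVtx n m} :
    p ∈ phiT n m sign vars ↔
      ∃ j, p = (hub (sign j), t j) ∨ ∃ i ∈ vars j, p = (side (!sign j) i, v j i) := by
  simp only [phiT, Set.mem_ofPred_eq]
  constructor
  · rintro (⟨j, hs, rfl⟩ | ⟨j, i, hs, hi, rfl⟩ | ⟨j, hs, rfl⟩ | ⟨j, i, hs, hi, rfl⟩) <;>
      refine ⟨j, ?_⟩ <;> simp [hub, side, *]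
  · rintro ⟨j, rfl | ⟨i, hi, rfl⟩⟩ <;> cases hs : sign j <;> simp [hub, side, *]

namespace MixedGraph.Orientation

variable (lam : (phiG n m sign vars).Orientation)

lemma arc_cases {x y : SOVtx n m} (h : lam.arc x y) :
    phiA n m sign vars x y ∨ (phiE n m vars).Adj x y ∧ lam.dir x y :=
  h.imp_right fun hd => ⟨lam.dir_adj _ _ hd, hd⟩

lemma eq_side_of_arc_hub {x : SOVtx n m} {b : Bool} (h : lam.arc x (hub b)) :
    ∃ i, x = side b i := by
  rcases lam.arc_cases h with h | ⟨hE, -⟩ <;> cases b <;> simp_all [phiA, phiE, hub, side]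

lemma eq_side_not_of_arc_side {x : SOVtx n m} {b : Bool} {i : Fin n} (h : lam.arc x (side b i)) :
    x = side (!b) i ∧ lam.dir (side (!b) i) (side b i) := by
  rcases lam.arc_cases h with h | ⟨hE, hd⟩ <;> cases b <;> simp_all [phiA, phiE, side]

lemma eq_hub_or_dir_of_arc_t {x : SOVtx n m} {j : Fin m} (h : lam.arc x (t j)) :
    x = hub (!sign j) ∨ ∃ i ∈ vars j, x = v j i ∧ lam.dir (v j i) (t j) := by
  rcases lam.arc_cases h with h | ⟨hE, hd⟩
  · cases hs : sign j <;> simp_all [phiA, hub]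
  · obtain ⟨-, i, hi, rfl⟩ := by simpa [phiE] using hE
    exact Or.inr ⟨i, hi, rfl, hd⟩

lemma eq_hub_or_dir_of_arc_v {x : SOVtx n m} {j : Fin m} {i : Fin n} (h : lam.arc x (v j i)) :
    x = hub (sign j) ∨ x = t j ∧ lam.dir (t j) (v j i) := by
  rcases lam.arc_cases h with h | ⟨hE, hd⟩ <;> cases hs : sign j <;> simp_all [phiA, phiE, hub]

lemma arc_side_hub (b : Bool) (i : Fin n) : lam.arc (side b i) (hub b) :=
  Or.inl (by cases b <;> simp [phiG, phiA, side, hub])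

lemma arc_hub_v {j : Fin m} {i : Fin n} (hi : i ∈ vars j) : lam.arc (hub (sign j)) (v j i) :=
  Or.inl (by cases hs : sign j <;> simp [phiG, phiA, hub, hs, hi])

lemma arc_hub_t (j : Fin m) : lam.arc (hub (!sign j)) (t j) :=
  Or.inl (by cases hs : sign j <;> simp [phiG, phiA, hub, hs])

lemma eq_of_reaches_hub {x : SOVtx n m} {b : Bool} (h : ReflTransGen lam.arc x (hub b)) :
    x = hub b ∨ (∃ i, x = side b i) ∨ ∃ i, x = side (!b) i ∧ lam.dir (side (!b) i) (side b i) := by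
  induction h using ReflTransGen.head_induction_on with
  | refl => exact Or.inl rfl
  | head hxy _ ih =>
    rcases ih with rfl | ⟨i, rfl⟩ | ⟨i, rfl, hd⟩
    · exact Or.inr (Or.inl (lam.eq_side_of_arc_hub hxy))
    · exact Or.inr (Or.inr ⟨i, lam.eq_side_not_of_arc_side hxy⟩)
    · obtain ⟨-, hd'⟩ := lam.eq_side_not_of_arc_side hxy
      rw [Bool.not_not] at hd'
      exact (lam.antisymm _ _ hd hd').elim

lemma not_reaches_hub_not (b : Bool) : ¬ReflTransGen lam.arc (hub b : SOVtx n m) (hub (!b)) := by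
  intro h
  rcases lam.eq_of_reaches_hub h with h | ⟨i, h⟩ | ⟨i, h, -⟩ <;> simp at h

lemma dir_side_of_reaches_v {j : Fin m} {i : Fin n} (hvt : lam.dir (v j i) (t j))
    (h : ReflTransGen lam.arc (side (!sign j) i) (v j i)) :
    lam.dir (side (!sign j) i) (side (sign j) i) := by
  rcases h.cases_tail with h | ⟨c, hc, hcv⟩
  · simp at h
  rcases lam.eq_hub_or_dir_of_arc_v hcv with rfl | ⟨rfl, htv⟩
  · rcases lam.eq_of_reaches_hub hc with h | ⟨i', h⟩ | ⟨i', h, hd⟩ <;> simp at h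
    subst h
    exact hd
  · exact (lam.antisymm _ _ hvt htv).elim

lemma exists_dir_side_of_satisfies (hsat : lam.Satisfies (phiT n m sign vars)) (j : Fin m) :
    ∃ i ∈ vars j, lam.dir (side (!sign j) i) (side (sign j) i) := by
  rcases (hsat _ (mem_phiT_iff.2 ⟨j, Or.inl rfl⟩)).cases_tail with h | ⟨c, hc, hct⟩
  · simp at h
  rcases lam.eq_hub_or_dir_of_arc_t hct with rfl | ⟨i, hi, rfl, hvt⟩
  · exact (lam.not_reaches_hub_not _ hc).elim
  · exact ⟨i, hi, lam.dir_side_of_reaches_v hvt (hsat _ (mem_phiT_iff.2 ⟨j, Or.inr ⟨i, hi, rfl⟩⟩))⟩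

open Classical in
noncomputable def toAssignment (i : Fin n) : Bool := decide (lam.dir (ri i) (li i))

lemma toAssignment_eq_of_dir_side {b : Bool} {i : Fin n} (h : lam.dir (side (!b) i) (side b i)) :
    lam.toAssignment i = b := by
  cases b
  · simpa [toAssignment, side] using lam.antisymm _ _ h
  · simpa [toAssignment, side] using h

end MixedGraph.Orientation

variable (sign) in
def assignmentRank (α : Fin n → Bool) : SOVtx n m → ℕ
  | l | r => 0
  | li i => if α i = true then 0 else 1
  | ri i => if α i = false then 0 else 1
  | t _ => 1
  | v j i => if α i = sign j then 2 else 0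

lemma assignmentRank_ne_of_adj (α : Fin n → Bool) {a b : SOVtx n m}
    (h : (phiE n m vars).Adj a b) : assignmentRank sign α a ≠ assignmentRank sign α b := by
  simp only [phiE, SimpleGraph.fromRel_adj] at h
  rcases h with ⟨-, (⟨i, rfl, rfl⟩ | ⟨j, i, -, rfl, rfl⟩) |
    (⟨i, rfl, rfl⟩ | ⟨j, i, -, rfl, rfl⟩)⟩ <;> simp only [assignmentRank] <;> split_ifs <;> simp_all

variable (sign vars) in
def assignmentOrientation (α : Fin n → Bool) : (phiG n m sign vars).Orientation :=
  .ofRank _ (assignmentRank sign α) fun _ _ => assignmentRank_ne_of_adj α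

section assignmentOrientation

variable (α : Fin n → Bool)

lemma assignmentOrientation_dir_side (i : Fin n) :
    (assignmentOrientation sign vars α).dir (side (!α i) i) (side (α i) i) := by
  cases h : α i <;> simp [assignmentOrientation, MixedGraph.Orientation.ofRank, assignmentRank,
    side, phiG, phiE, h]

lemma assignmentOrientation_dir_v_t {j : Fin m} {i : Fin n} (hi : i ∈ vars j)
    (h : α i = sign j) : (assignmentOrientation sign vars α).dir (v j i) (t j) := by
  simp [assignmentOrientation, MixedGraph.Orientation.ofRank, assignmentRank, phiG, phiE, h, hi]

lemma assignmentOrientation_dir_t_v {j : Fin m} {i : Fin n} (hi : i ∈ vars j)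
    (h : α i ≠ sign j) : (assignmentOrientation sign vars α).dir (t j) (v j i) := by
  simp [assignmentOrientation, MixedGraph.Orientation.ofRank, assignmentRank, phiG, phiE, h, hi]

lemma assignmentOrientation_satisfies (hα : ∀ j, ∃ i ∈ vars j, α i = sign j) :
    (assignmentOrientation sign vars α).Satisfies (phiT n m sign vars) := by
  set lam := assignmentOrientation sign vars α
  intro p hp
  obtain ⟨j, rfl | ⟨i, hi, rfl⟩⟩ := mem_phiT_iff.1 hp
  · obtain ⟨i, hi, hαi⟩ := hα j
    exact (ReflTransGen.single (lam.arc_hub_v hi)).tail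
      (Or.inr (assignmentOrientation_dir_v_t α hi hαi))
  · by_cases hαi : α i = sign j
    · have hside : lam.arc (side (!sign j) i) (side (sign j) i) :=
        Or.inr (hαi ▸ assignmentOrientation_dir_side α i)
      exact ((ReflTransGen.single hside).tail (lam.arc_side_hub _ i)).tail (lam.arc_hub_v hi)
    · exact ((ReflTransGen.single (lam.arc_side_hub _ i)).tail (lam.arc_hub_t j)).tail
        (Or.inr (assignmentOrientation_dir_t_v α hi hαi))

end assignmentOrientation

theorem steinerOrientation_stmt7_general (n m : ℕ) (sign : Fin m → Bool)
    (vars : Fin m → Finset (Fin n)) :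
    (∃ α : Fin n → Bool, ∀ j, ∃ i ∈ vars j, α i = sign j) ↔
      (phiG n m sign vars).YesInstance (phiT n m sign vars) := by
  constructor
  · rintro ⟨α, hα⟩
    exact ⟨assignmentOrientation sign vars α, assignmentOrientation_satisfies α hα⟩
  · rintro ⟨lam, hsat⟩
    refine ⟨lam.toAssignment, fun j => ?_⟩
    obtain ⟨i, hi, hdir⟩ := lam.exists_dir_side_of_satisfies hsat j
    exact ⟨i, hi, lam.toAssignment_eq_of_dir_side hdir⟩

/-- A monotone 3-CNF formula `φ` (clause `j` is positive iff
`sign j = true`, its variables are `vars j`, a nonempty set of at most 3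
variables) is satisfiable iff `(G(φ), T(φ))` is a yes-instance of
Steiner Orientation. -/
theorem steinerOrientation_stmt7 (n m : ℕ) (sign : Fin m → Bool)
    (vars : Fin m → Finset (Fin n))
    (hvars : ∀ j, (vars j).Nonempty ∧ (vars j).card ≤ 3) :
    (∃ α : Fin n → Bool, ∀ j, ∃ i ∈ vars j, α i = sign j) ↔
      (phiG n m sign vars).YesInstance (phiT n m sign vars) :=
  steinerOrientation_stmt7_general n m sign vars
end
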